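/- arXiv:math/9808094 — 5 statements merged into one kernel-verified Lean document; each statement's English description precedes it below -/
import Mathlib

section
/- If G is a group whose center is trivial, then the automorphism group Aut(G) also has trivial center. -/
/-!
Every automorphism `φ` satisfies `φ ∘ conj g ∘ φ⁻¹ = conj (φ g)`. If `φ` is central in `Aut G`,
this gives `conj (φ g) = conj g` for all `g`, and since the kernel of `g ↦ conj g` is the center
of `G`, trivial center forces `φ g = g`.
-/

namespace MulAut

variable {G : Type*} [Group G]

theorem ker_conj : (conj : G →* MulAut G).ker = Subgroup.center G := by
  ext g
  simp only [MonoidHom.mem_ker, Subgroup.mem_center_iff, MulEquiv.ext_iff, conj_apply, one_apply]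
  exact forall_congr' fun _ => mul_inv_eq_iff_eq_mul.trans eq_comm

theorem conj_injective_of_center_eq_bot (hG : Subgroup.center G = ⊥) :
    Function.Injective (conj : G →* MulAut G) :=
  (MonoidHom.ker_eq_bot_iff _).mp (ker_conj.trans hG)

theorem mul_conj (φ : MulAut G) (g : G) : φ * conj g = conj (φ g) * φ := by
  ext x
  simp only [mul_apply, conj_apply, map_mul, map_inv]

end MulAut

/-- If a group `G` has trivial center, then its automorphism group `Aut G = MulAut G`
also has trivial center. -/
theorem center_trivial_of_aut_of_center_trivial (G : Type*) [Group G]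
    (hG : Subgroup.center G = ⊥) :
    Subgroup.center (MulAut G) = ⊥ := by
  refine (Subgroup.eq_bot_iff_forall _).mpr fun φ hφ => MulEquiv.ext fun g => ?_
  apply MulAut.conj_injective_of_center_eq_bot hG
  have hcomm : φ * MulAut.conj g = MulAut.conj g * φ := (hφ.comm _).eq
  rw [MulAut.mul_conj] at hcomm
  exact mul_right_cancel hcomm
end

section
/- Let G = ⊕_p ℤ[1/p] be the direct sum over all primes p of the additive groups of p-adic rationals, and fix a prime p. An element g ∈ G is divisible by pⁿ for every natural number n (i.e., for every n there exists h ∈ G with pⁿ·h = g) if and only if the support of g is contained in {p}, i.e., the q-component of g is zero for every prime q ≠ p. -/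
open DirectSum

/-- For a prime `p`, the additive subgroup `ℤ[1/p] ⊆ ℚ` of `p`-adic rationals,
consisting of all rationals of the form `m / p ^ n` with `m : ℤ` and `n : ℕ`. -/
def padicRationals (p : ℕ) (hp : p.Prime) : AddSubgroup ℚ where
  carrier := {x : ℚ | ∃ m : ℤ, ∃ n : ℕ, x = (m : ℚ) / (p : ℚ) ^ n}
  zero_mem' := ⟨0, 0, by simp⟩
  add_mem' := by
    rintro a b ⟨m₁, n₁, rfl⟩ ⟨m₂, n₂, rfl⟩
    have hp0 : (p : ℚ) ≠ 0 := by exact_mod_cast hp.ne_zero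
    refine ⟨m₁ * (p : ℤ) ^ n₂ + m₂ * (p : ℤ) ^ n₁, n₁ + n₂, ?_⟩
    push_cast
    rw [pow_add]
    field_simp
  neg_mem' := by
    rintro a ⟨m, n, rfl⟩
    exact ⟨-m, n, by push_cast; ring⟩

/-- In `G = ⊕_p ℤ[1/p]`, an element `g` is divisible by `p ^ n` for every `n : ℕ`
if and only if all components of `g` away from `p` vanish. -/
theorem divisible_iff_support_subset_singleton (p : Nat.Primes)
    (g : ⨁ (q : Nat.Primes), padicRationals q.1 q.2) :
    (∀ n : ℕ, ∃ h : ⨁ (q : Nat.Primes), padicRationals q.1 q.2, (p.1 ^ n) • h = g) ↔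
      ∀ q : Nat.Primes, q ≠ p → g q = 0 := by
  constructor
  · intro hdiv q hq
    obtain ⟨a, k, hak⟩ := (g q).2
    have hq0 : (q.1 : ℚ) ≠ 0 := by exact_mod_cast q.2.ne_zero
    -- it suffices to show a = 0
    have key : ∀ n : ℕ, (p.1 : ℤ) ^ n ∣ a := by
      intro n
      obtain ⟨h, hh⟩ := hdiv n
      obtain ⟨m, j, hmj⟩ := (h q).2
      have happ : ((p.1 ^ n • h) q : ℚ) = (g q : ℚ) := by rw [hh]
      have : (p.1 : ℚ) ^ n * ((m : ℚ) / (q.1 : ℚ) ^ j) = (a : ℚ) / (q.1 : ℚ) ^ k := by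
        rw [← hmj, ← hak]
        rw [DFinsupp.smul_apply] at happ
        push_cast at happ ⊢
        rw [← happ]
        simp [nsmul_eq_mul]
      have heq : (p.1 : ℤ) ^ n * m * (q.1 : ℤ) ^ k = a * (q.1 : ℤ) ^ j := by
        field_simp at this
        exact_mod_cast this.trans (mul_comm _ _)
      have hcop : IsCoprime ((p.1 : ℤ) ^ n) ((q.1 : ℤ) ^ j) := by
        apply IsCoprime.pow
        rw [Int.isCoprime_iff_gcd_eq_one]
        exact (Nat.coprime_primes p.2 q.2).mpr (fun e => hq (Subtype.ext e.symm))
      exact hcop.dvd_of_dvd_mul_right ⟨m * (q.1 : ℤ) ^ k, by linarith [heq]⟩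
    have ha : a = 0 := by
      by_contra ha
      obtain hd := key a.natAbs
      have h1 : p.1 ^ a.natAbs ∣ a.natAbs := by
        have := Int.natAbs_dvd_natAbs.mpr hd
        rwa [Int.natAbs_pow, Int.natAbs_natCast] at this
      have h2 : p.1 ^ a.natAbs ≤ a.natAbs := Nat.le_of_dvd (Int.natAbs_pos.mpr ha) h1
      have h3 : a.natAbs < 2 ^ a.natAbs := Nat.lt_two_pow_self
      have h4 : 2 ^ a.natAbs ≤ p.1 ^ a.natAbs := Nat.pow_le_pow_left p.2.two_le _
      omega
    apply Subtype.ext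
    rw [hak, ha]
    simp
  · intro hsupp n
    obtain ⟨m, k, hmk⟩ := (g p).2
    have hp0 : (p.1 : ℚ) ≠ 0 := by exact_mod_cast p.2.ne_zero
    refine ⟨DirectSum.of _ p ⟨(m : ℚ) / (p.1 : ℚ) ^ (k + n), ⟨m, k + n, rfl⟩⟩, ?_⟩
    apply DFinsupp.ext
    intro q
    rw [DFinsupp.smul_apply]
    by_cases hq : q = p
    · subst hq
      rw [DirectSum.of_eq_same]
      apply Subtype.ext
      push_cast [nsmul_eq_mul]
      rw [hmk, pow_add]
      field_simp
    · rw [DirectSum.of_eq_of_ne _ _ _ hq, hsupp q hq]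
      simp
end

section
/- Let G = ⊕_p ℤ[1/p] be the direct sum over all primes p of the additive groups of p-adic rationals. Then the group of additive automorphisms of G is isomorphic to the direct product over all primes p of the groups of additive automorphisms of ℤ[1/p]: AddAut(G) ≅ Π_p AddAut(ℤ[1/p]). -/
open DirectSum

/-!
Every element of `ℤ[1/p]` is divisible by all powers of `p`, while for `q ≠ p` the only
element of `ℤ[1/q]` divisible by all powers of `p` is `0`. Hence there are no nonzero
homomorphisms `ℤ[1/p] → ℤ[1/q]`, so every endomorphism of `⊕_p ℤ[1/p]` is diagonal, and an
automorphism is the same thing as a family of automorphisms of the summands.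
-/

namespace DirectSum

variable {ι : Type*} [DecidableEq ι] {A B : ι → Type*} [∀ i, AddCommMonoid (A i)]
  [∀ i, AddCommMonoid (B i)]

def blockDiag (f : (⨁ i, A i) →+ ⨁ i, A i) (i : ι) : A i →+ A i :=
  (DFinsupp.evalAddMonoidHom i).comp (f.comp (of A i))

theorem blockDiag_apply (f : (⨁ i, A i) →+ ⨁ i, A i) (i : ι) (x : A i) :
    blockDiag f i x = f (of A i x) i :=
  rfl

theorem blockDiag_id (i : ι) :
    blockDiag (AddMonoidHom.id (⨁ i, A i)) i = AddMonoidHom.id (A i) := by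
  ext x
  simp [blockDiag_apply]

theorem apply_of_eq_of_blockDiag (hA : Pairwise fun i j => ∀ f : A i →+ A j, f = 0)
    (f : (⨁ i, A i) →+ ⨁ i, A i) (i : ι) (x : A i) :
    f (of A i x) = of A i (blockDiag f i x) := by
  ext j
  by_cases hij : i = j
  · subst hij
    rw [of_eq_same]
    rfl
  · rw [of_eq_of_ne _ _ _ (Ne.symm hij)]
    exact DFunLike.congr_fun (hA hij ((DFinsupp.evalAddMonoidHom j).comp (f.comp (of A i)))) x

theorem blockDiag_comp (hA : Pairwise fun i j => ∀ f : A i →+ A j, f = 0)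
    (f g : (⨁ i, A i) →+ ⨁ i, A i) (i : ι) :
    blockDiag (f.comp g) i = (blockDiag f i).comp (blockDiag g i) := by
  ext x
  rw [AddMonoidHom.comp_apply, blockDiag_apply, AddMonoidHom.comp_apply,
    apply_of_eq_of_blockDiag hA g]
  rfl

theorem mapRange_addEquiv_of (e : ∀ i, A i ≃+ B i) (i : ι) (x : A i) :
    DFinsupp.mapRange.addEquiv e (of A i x) = of B i (e i x) :=
  DFinsupp.mapRange_single (hf := fun i => map_zero (e i))

def addAutEquivPi (hA : Pairwise fun i j => ∀ f : A i →+ A j, f = 0) :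
    AddAut (⨁ i, A i) ≃+ Π i, AddAut (A i) where
  toFun φ i := (blockDiag φ i).toAddEquiv (blockDiag φ.symm i)
    (by rw [← blockDiag_comp hA, AddEquiv.coe_addMonoidHom_symm_comp_coe_addMonoidHom,
      blockDiag_id])
    (by rw [← blockDiag_comp hA, AddEquiv.coe_addMonoidHom_comp_coe_addMonoidHom_symm,
      blockDiag_id])
  invFun e := DFinsupp.mapRange.addEquiv e
  left_inv φ := by
    refine AddEquiv.toAddMonoidHom_injective (addHom_ext fun i x => ?_)
    exact (mapRange_addEquiv_of _ i x).trans (apply_of_eq_of_blockDiag hA φ i x).symm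
  right_inv e := by
    funext i
    ext x
    exact congr($(mapRange_addEquiv_of e i x) i).trans (of_eq_same i _)
  map_add' φ ψ := by
    funext i
    ext x
    exact DFunLike.congr_fun (blockDiag_comp hA φ ψ i) x

end DirectSum

namespace padicRationals

variable {p q : ℕ}

theorem exists_pow_smul_eq (hp : p.Prime) (x : padicRationals p hp) (k : ℕ) :
    ∃ y : padicRationals p hp, ((p : ℤ) ^ k) • y = x := by
  obtain ⟨m, n, hx⟩ := x.2
  refine ⟨⟨m / (p : ℚ) ^ (n + k), m, n + k, rfl⟩, Subtype.ext ?_⟩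
  have hp0 : (p : ℚ) ≠ 0 := by exact_mod_cast hp.ne_zero
  simp only [AddSubgroup.coe_zsmul, zsmul_eq_mul, hx, pow_add]
  push_cast
  field_simp

theorem eq_zero_of_forall_exists_pow_smul_eq (hp : p.Prime) (hq : q.Prime) (hpq : p ≠ q)
    (y : padicRationals q hq)
    (hy : ∀ k : ℕ, ∃ z : padicRationals q hq, ((p : ℤ) ^ k) • z = y) : y = 0 := by
  obtain ⟨a, b, hab⟩ := y.2
  have hq0 : (q : ℚ) ≠ 0 := by exact_mod_cast hq.ne_zero
  have hdvd : ∀ k : ℕ, (p : ℤ) ^ k ∣ a := by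
    intro k
    obtain ⟨z, hz⟩ := hy k
    obtain ⟨c, d, hcd⟩ := z.2
    have hℚ : (a : ℚ) * (q : ℚ) ^ d = (p : ℚ) ^ k * c * (q : ℚ) ^ b := by
      have := congrArg Subtype.val hz
      simp only [AddSubgroup.coe_zsmul, zsmul_eq_mul, hcd, hab] at this
      push_cast at this
      field_simp at this
      linear_combination -this
    have hℤ : a * (q : ℤ) ^ d = (p : ℤ) ^ k * (c * (q : ℤ) ^ b) := by
      rw [← mul_assoc]
      exact_mod_cast hℚ
    exact ((Nat.coprime_primes hp hq).2 hpq).isCoprime.pow.dvd_of_dvd_mul_right ⟨_, hℤ⟩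
  have ha : a = 0 := by
    by_contra ha
    obtain ⟨n, hn⟩ :=
      (Int.finiteMultiplicity_iff (a := p)).2 ⟨by simpa using hp.ne_one, ha⟩
    exact hn (hdvd (n + 1))
  exact Subtype.ext (by simp [hab, ha])

theorem addMonoidHom_eq_zero (hp : p.Prime) (hq : q.Prime) (hpq : p ≠ q)
    (f : padicRationals p hp →+ padicRationals q hq) : f = 0 := by
  ext x
  refine congrArg Subtype.val (eq_zero_of_forall_exists_pow_smul_eq hp hq hpq (f x) fun k => ?_)
  obtain ⟨y, rfl⟩ := exists_pow_smul_eq hp x k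
  exact ⟨f y, (map_zsmul f _ y).symm⟩

end padicRationals

/-- The automorphism group of `G = ⊕_p ℤ[1/p]` is isomorphic to the direct product
`Π_p AddAut (ℤ[1/p])` of the automorphism groups of the components. -/
theorem addAut_directSum_mulEquiv_pi :
    Nonempty ((AddAut (⨁ (q : Nat.Primes), padicRationals q.1 q.2)) ≃+
      ((q : Nat.Primes) → AddAut (padicRationals q.1 q.2))) :=
  ⟨DirectSum.addAutEquivPi fun p q hpq =>
    padicRationals.addMonoidHom_eq_zero p.2 q.2 (Subtype.coe_injective.ne hpq)⟩
end

section
/- Let G = ⊕_p ℤ[1/p] be the direct sum over all primes p of the additive groups of p-adic rationals. Then the cardinality of the automorphism group AddAut(G) is exactly 2^ℵ₀. -/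
open DirectSum

/-!
A countable group has at most `ℵ₀ ^ ℵ₀ = 2 ^ ℵ₀` self-maps, and `⊕_p ℤ[1/p]` is countable.
Conversely, automorphisms of the summands act componentwise, so `∏_p AddAut ℤ[1/p]` embeds
in `AddAut (⊕_p ℤ[1/p])`, and each factor contains the two automorphisms `id ≠ -id`.
-/

open Cardinal

universe u

instance DirectSum.countable {ι : Type*} [Countable ι] (β : ι → Type*)
    [∀ i, AddCommMonoid (β i)] [∀ i, Countable (β i)] : Countable (⨁ i, β i) :=
  inferInstanceAs (Countable (Π₀ i, β i))

theorem mk_addAut_le_two_power_aleph0 (A : Type*) [Add A] [Countable A] :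
    #(AddAut A) ≤ 2 ^ ℵ₀ :=
  calc #(AddAut A) ≤ #(A → A) := mk_le_of_injective DFunLike.coe_injective
    _ = #A ^ #A := (power_def A A).symm
    _ ≤ ℵ₀ ^ #A := power_le_power_right mk_le_aleph0
    _ ≤ ℵ₀ ^ ℵ₀ := power_le_power_left aleph0_ne_zero mk_le_aleph0
    _ = 2 ^ ℵ₀ := power_self_eq le_rfl

theorem nontrivial_addAut_of_exists_neg_ne {A : Type*} [AddCommGroup A]
    (h : ∃ x : A, -x ≠ x) :
    Nontrivial (AddAut A) := by
  obtain ⟨x, hx⟩ := h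
  exact ⟨AddEquiv.neg A, AddEquiv.refl A, fun he => hx (DFunLike.congr_fun he x)⟩

theorem padicRationals.exists_neg_ne (p : ℕ) (hp : p.Prime) :
    ∃ x : padicRationals p hp, -x ≠ x :=
  ⟨⟨1, 1, 0, by simp⟩, fun h => by norm_num [Subtype.ext_iff] at h⟩

noncomputable def DirectSum.addAutOfPi {ι : Type*} (β : ι → Type*) [∀ i, AddCommMonoid (β i)]
    (e : ∀ i, AddAut (β i)) : AddAut (⨁ i, β i) :=
  DFinsupp.mapRange.addEquiv e

theorem DirectSum.addAutOfPi_apply {ι : Type*} (β : ι → Type*) [∀ i, AddCommMonoid (β i)]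
    (e : ∀ i, AddAut (β i)) (x : ⨁ i, β i) (i : ι) : addAutOfPi β e x i = e i (x i) :=
  rfl

theorem DirectSum.addAutOfPi_injective {ι : Type*} (β : ι → Type*)
    [∀ i, AddCommMonoid (β i)] :
    Function.Injective (DirectSum.addAutOfPi β) := by
  classical
  intro e f h
  funext i
  ext x
  simpa only [DirectSum.addAutOfPi_apply, of_eq_same] using
    congrArg (fun g : AddAut (⨁ i, β i) => g (of β i x) i) h

theorem two_power_mk_le_mk_addAut_directSum {ι : Type u} (β : ι → Type u)
    [∀ i, AddCommGroup (β i)] (hβ : ∀ i, ∃ x : β i, -x ≠ x) :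
    2 ^ #ι ≤ #(AddAut (⨁ i, β i)) :=
  have := fun i => nontrivial_addAut_of_exists_neg_ne (hβ i)
  calc 2 ^ #ι = prod fun _ : ι => 2 := (prod_const' ι 2).symm
    _ ≤ prod fun i => #(AddAut (β i)) :=
      prod_le_prod _ _ fun _ => two_le_iff.2 (exists_pair_ne _)
    _ = #(∀ i, AddAut (β i)) := (mk_pi _).symm
    _ ≤ #(AddAut (⨁ i, β i)) := mk_le_of_injective (DirectSum.addAutOfPi_injective β)

/-- The automorphism group of `G = ⊕_p ℤ[1/p]` has cardinality exactly `2 ^ ℵ₀`. -/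
theorem card_addAut_directSum_padicRationals :
    Cardinal.mk (AddAut (⨁ (q : Nat.Primes), padicRationals q.1 q.2)) =
      2 ^ Cardinal.aleph0 := by
  refine le_antisymm (mk_addAut_le_two_power_aleph0 _) ?_
  calc (2 : Cardinal) ^ ℵ₀ = 2 ^ #Nat.Primes := by rw [mk_eq_aleph0 Nat.Primes]
    _ ≤ _ := two_power_mk_le_mk_addAut_directSum (fun q : Nat.Primes => padicRationals q.1 q.2)
          fun q => padicRationals.exists_neg_ne q.1 q.2
end

section
/- Let G = ⊕_p ℤ[1/p] be the direct sum over all primes p of the additive groups of p-adic rationals. Then the cardinality of the automorphism group of the automorphism group of G, that is, of Aut(AddAut(G)), is exactly 2^(2^ℵ₀). In particular, G is a countable group with |Aut(G)| = 2^ℵ₀ and |Aut(Aut(G))| = 2^(2^ℵ₀). -/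
/-!
Every homomorphism `ℤ[1/p] → ℤ[1/q]` with `p ≠ q` vanishes, since its value at `1` would be
divisible by all powers of `p` inside `ℤ[1/q]`; and every homomorphism from a subgroup of `ℚ` to
`ℚ` is multiplication by a rational. Hence an automorphism of `G = ⊕_p ℤ[1/p]` acts on each
summand as multiplication by a nonzero rational, so `Aut G` is abelian, and the signs of these
scalars give a surjection `Aut G → {±1}^primes`, split by the diagonal sign automorphisms.
These already give `2^ℵ₀` automorphisms, the most a countable group can have.

For `A = Aut G`, let `c` be the sign flip on `ℤ[1/2]` and `χ : A → {±1}^(primes ≠ 2)` the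
remaining signs. As `A` is abelian and `χ c = 1`, every character `λ` of `{±1}^(primes ≠ 2)`
yields an automorphism `a ↦ a · c^(λ (χ a))` of `A`, and distinct characters yield distinct
automorphisms. There are `2^(2^ℵ₀)` characters: they form the dual of an `𝔽₂`-vector space of
dimension `2^ℵ₀`.
-/

open DirectSum

universe u

open Cardinal

instance DirectSum.instCountable {ι : Type*} [Countable ι] (β : ι → Type*)
    [∀ i, AddCommMonoid (β i)] [∀ i, Countable (β i)] : Countable (⨁ i, β i) :=
  inferInstanceAs (Countable (Π₀ i, β i))

theorem AddAut.mk_le_two_pow_aleph0 (α : Type*) [Add α] [Countable α] :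
    #(AddAut α) ≤ 2 ^ ℵ₀ :=
  calc #(AddAut α) ≤ #(α → α) :=
        mk_le_of_injective fun _ _ h => AddEquiv.ext (congrFun h)
    _ = #α ^ #α := (power_def α α).symm
    _ ≤ ℵ₀ ^ #α := power_le_power_right mk_le_aleph0
    _ ≤ ℵ₀ ^ ℵ₀ := power_le_power_left aleph0_ne_zero mk_le_aleph0
    _ = 2 ^ ℵ₀ := power_self_eq le_rfl

section Transvection

variable {A B : Type*} [AddGroup A] [AddGroup B]

def AddAut.transvection (ι : B →+ A) (hι : ∀ b a, AddCommute (ι b) a) (f : A →+ B)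
    (hf : f.comp ι = 0) : AddAut A where
  toFun a := a + ι (f a)
  invFun a := a - ι (f a)
  left_inv a := by
    have : f (ι (f a)) = 0 := DFunLike.congr_fun hf (f a)
    simp [this]
  right_inv a := by
    have : f (ι (f a)) = 0 := DFunLike.congr_fun hf (f a)
    simp [this]
  map_add' a b := by
    simp only [map_add]
    rw [add_assoc, ← add_assoc b, ← (hι (f a) b).eq, add_assoc, add_assoc]

theorem AddAut.transvection_injective {ι : B →+ A} (hι_inj : Function.Injective ι)
    (hι : ∀ b a, AddCommute (ι b) a) {f g : A →+ B} (hf : f.comp ι = 0) (hg : g.comp ι = 0)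
    (h : transvection ι hι f hf = transvection ι hι g hg) : f = g :=
  AddMonoidHom.ext fun a => hι_inj (add_left_cancel (DFunLike.congr_fun h a))

end Transvection

theorem AddAut.mk_addMonoidHom_le_mk_addAut {A B C : Type u} [AddGroup A] [AddGroup B]
    [AddGroup C] (ι : B →+ A) (hι_inj : Function.Injective ι) (hι : ∀ b a, AddCommute (ι b) a)
    (χ : A →+ C) (hχ : Function.Surjective χ) (hχι : χ.comp ι = 0) :
    #(C →+ B) ≤ #(AddAut A) := by
  refine mk_le_of_injective (f := fun l : C →+ B => transvection ι hι (l.comp χ)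
    (by rw [AddMonoidHom.comp_assoc, hχι, AddMonoidHom.comp_zero])) fun l l' h => ?_
  exact (AddMonoidHom.cancel_right hχ).1 (transvection_injective hι_inj hι _ _ h)

theorem Cardinal.mk_addMonoidHom_pi_of_card_eq_prime {ι B : Type u} [Infinite ι]
    [AddCommGroup B] {p : ℕ} [Fact p.Prime] (hB : Nat.card B = p) :
    #((ι → B) →+ B) = p ^ (p : Cardinal) ^ #ι := by
  let e : B ≃+ ZMod p := addEquivOfPrimeCardEq hB (Nat.card_zmod p)
  let b := Module.Basis.ofVectorSpace (ZMod p) (ι → ZMod p)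
  have hrank : #(Module.Basis.ofVectorSpaceIndex (ZMod p) (ι → ZMod p)) = p ^ #ι := by
    rw [b.mk_eq_rank'', rank_fun_infinite]
    simp
  calc #((ι → B) →+ B) = #((ι → ZMod p) →+ ZMod p) :=
        mk_congr ((AddEquiv.addMonoidHomCongrLeftEquiv (AddEquiv.piCongrRight fun _ => e)).trans
          (AddEquiv.addMonoidHomCongrRightEquiv e))
    _ = #((ι → ZMod p) →ₗ[ZMod p] ZMod p) :=
        mk_congr (AddMonoidHom.toZModLinearMapEquiv p).toEquiv
    _ = #(Module.Basis.ofVectorSpaceIndex (ZMod p) (ι → ZMod p) → ZMod p) :=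
        (mk_congr (b.constr ℕ).toEquiv).symm
    _ = p ^ (p : Cardinal) ^ #ι := by simp [hrank]

theorem AddMonoidHom.apply_mul_coe_comm {H : AddSubgroup ℚ} (f : H →+ ℚ) (x y : H) :
    f x * y = f y * x := by
  -- both sides are `x.num * y.num`
  have key : ((x : ℚ).den * (y : ℚ).num : ℤ) • x = ((y : ℚ).den * (x : ℚ).num : ℤ) • y := by
    ext
    simp only [AddSubgroup.coe_zsmul, zsmul_eq_mul]
    push_cast
    linear_combination
      (y : ℚ).num * Rat.mul_den_eq_num (x : ℚ) - (x : ℚ).num * Rat.mul_den_eq_num (y : ℚ)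
  have hfxy := congrArg f key
  simp only [map_zsmul, zsmul_eq_mul] at hfxy
  push_cast at hfxy
  rw [← Rat.num_div_den (x : ℚ), ← Rat.num_div_den (y : ℚ)]
  field_simp
  linear_combination hfxy

def Rat.unitsSign : ℚˣ →* ℤˣ :=
  Units.map ((SignType.castHom : SignType →*₀ ℤ).comp signHom : ℚ →*₀ ℤ)

theorem Rat.unitsSign_mk0_intCast (u : ℤˣ) (h : ((u : ℤ) : ℚ) ≠ 0) :
    Rat.unitsSign (Units.mk0 (u : ℤ) h) = u := by
  rcases Int.units_eq_one_or u with rfl | rfl <;> ext <;> simp [Rat.unitsSign]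

theorem one_mem_padicRationals (p : ℕ) (hp : p.Prime) : (1 : ℚ) ∈ padicRationals p hp :=
  ⟨1, 0, by simp⟩

theorem padicValRat_nonneg_of_mem_padicRationals {p q : ℕ} [Fact p.Prime] (hq : q.Prime)
    (hpq : p ≠ q) {x : ℚ} (hx : x ∈ padicRationals q hq) : 0 ≤ padicValRat p x := by
  obtain ⟨m, n, rfl⟩ := hx
  rcases eq_or_ne m 0 with rfl | hm
  · simp
  have : Fact q.Prime := ⟨hq⟩
  rw [padicValRat.div (by exact_mod_cast hm) (pow_ne_zero _ (by exact_mod_cast hq.ne_zero)),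
    padicValRat.pow, padicValRat.of_nat, padicValNat_primes hpq, padicValRat.of_int]
  simp

theorem padicRationals_addMonoidHom_eq_zero {p q : ℕ} (hp : p.Prime) (hq : q.Prime)
    (hpq : p ≠ q) (f : padicRationals p hp →+ padicRationals q hq) : f = 0 := by
  have : Fact p.Prime := ⟨hp⟩
  set one : padicRationals p hp := ⟨1, one_mem_padicRationals p hp⟩
  have hp0 : (p : ℚ) ≠ 0 := by exact_mod_cast hp.ne_zero
  -- `f 1` is divisible by all powers of `p` in `ℤ[1/q]`, where `p`-adic valuations are `≥ 0`
  have hval (n : ℕ) (h : (f one : ℚ) ≠ 0) : n ≤ padicValRat p (f one) := by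
    let y : padicRationals p hp := ⟨1 / p ^ n, 1, n, by simp⟩
    have hy : p ^ n • y = one := by ext; simp [y, one, hp0]
    have hfy : (f one : ℚ) = p ^ n * f y := by
      rw [← hy, map_nsmul]; simp
    have hy0 : (f y : ℚ) ≠ 0 := by rintro h'; simp [hfy, h'] at h
    rw [hfy, padicValRat.mul (pow_ne_zero _ hp0) hy0, padicValRat.pow, padicValRat.self hp.one_lt]
    linarith [padicValRat_nonneg_of_mem_padicRationals hq hpq (f y).2]
  have hone : (f one : ℚ) = 0 := by
    by_contra h
    have := hval ((padicValRat p (f one)).toNat + 1) h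
    push_cast at this
    linarith [Int.self_le_toNat (padicValRat p (f one))]
  ext x
  simpa [one, hone] using ((padicRationals q hq).subtype.comp f).apply_mul_coe_comm x one

abbrev PadicRationalsSum := ⨁ q : Nat.Primes, padicRationals q.1 q.2

namespace PadicRationalsSum

def one (p : Nat.Primes) : padicRationals p.1 p.2 := ⟨1, one_mem_padicRationals p.1 p.2⟩

/-- `φ` acts on the `p`-th summand as multiplication by `scale φ p`. -/
def scale (φ : PadicRationalsSum →+ PadicRationalsSum) (p : Nat.Primes) : ℚ :=
  φ (of _ p (one p)) p

section Endomorphisms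

variable (φ : PadicRationalsSum →+ PadicRationalsSum)

theorem apply_of_apply_of_ne {p q : Nat.Primes} (hpq : p ≠ q) (x : padicRationals p.1 p.2) :
    φ (of _ p x) q = 0 :=
  DFunLike.congr_fun (padicRationals_addMonoidHom_eq_zero p.2 q.2
    (Nat.Primes.coe_nat_injective.ne hpq)
    ((DFinsupp.evalAddMonoidHom q).comp (φ.comp (of _ p)))) x

theorem coe_apply_of_apply_of_self (p : Nat.Primes) (x : padicRationals p.1 p.2) :
    (φ (of _ p x) p : ℚ) = scale φ p * x := by
  have h := ((padicRationals p.1 p.2).subtype.comp ((DFinsupp.evalAddMonoidHom p).comp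
    (φ.comp (of _ p)))).apply_mul_coe_comm x (one p)
  simp only [AddMonoidHom.comp_apply, AddSubgroup.coe_subtype, one, mul_one] at h
  exact h

theorem exists_apply_of_eq_of (p : Nat.Primes) (x : padicRationals p.1 p.2) :
    ∃ y, φ (of _ p x) = of _ p y ∧ (y : ℚ) = scale φ p * x := by
  refine ⟨_, ?_, coe_apply_of_apply_of_self φ p x⟩
  ext q
  rcases eq_or_ne p q with rfl | hpq
  · rw [of_eq_same]
  · rw [of_eq_of_ne _ _ _ hpq.symm, apply_of_apply_of_ne φ hpq]

theorem scale_comp (ψ : PadicRationalsSum →+ PadicRationalsSum) (p : Nat.Primes) :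
    scale (φ.comp ψ) p = scale φ p * scale ψ p := by
  obtain ⟨y, hψ, hy⟩ := exists_apply_of_eq_of ψ p (one p)
  rw [scale, AddMonoidHom.comp_apply, hψ, coe_apply_of_apply_of_self, hy, one, mul_one]

theorem comp_comm (ψ : PadicRationalsSum →+ PadicRationalsSum) : φ.comp ψ = ψ.comp φ := by
  refine DirectSum.addHom_ext fun p x => ?_
  obtain ⟨y, hψ, hy⟩ := exists_apply_of_eq_of ψ p x
  obtain ⟨z, hφ, hz⟩ := exists_apply_of_eq_of φ p x
  obtain ⟨y', hφy, hy'⟩ := exists_apply_of_eq_of φ p y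
  obtain ⟨z', hψz, hz'⟩ := exists_apply_of_eq_of ψ p z
  simp only [AddMonoidHom.comp_apply, hψ, hφ, hφy, hψz]
  congr 1
  ext
  rw [hy', hz', hy, hz]
  ring

end Endomorphisms

theorem addAut_addCommute (φ ψ : AddAut PadicRationalsSum) : AddCommute φ ψ :=
  AddEquiv.ext fun x => DFunLike.congr_fun (comp_comm φ ψ) x

-- Mathlib makes `AddAut` an additive group: `φ + ψ` is the composite `φ ∘ ψ`.
theorem scale_add (φ ψ : AddAut PadicRationalsSum) (p : Nat.Primes) :
    scale ↑(φ + ψ) p = scale φ p * scale ψ p :=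
  scale_comp φ ψ p

theorem scale_zero (p : Nat.Primes) : scale ↑(0 : AddAut PadicRationalsSum) p = 1 := by
  simp [scale, one]

theorem scale_ne_zero (φ : AddAut PadicRationalsSum) (p : Nat.Primes) : scale φ p ≠ 0 := by
  intro h
  have := scale_add (-φ) φ p
  rw [neg_add_cancel, scale_zero, h, mul_zero] at this
  exact one_ne_zero this

def signChar : AddAut PadicRationalsSum →+ (Nat.Primes → Additive ℤˣ) where
  toFun φ p := .ofMul (Rat.unitsSign (Units.mk0 (scale φ p) (scale_ne_zero φ p)))
  map_zero' := by ext p; simp [scale_zero]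
  map_add' φ ψ := by ext p; simp [scale_add, Units.mk0_mul]

def signAut : (Nat.Primes → Additive ℤˣ) →+ AddAut PadicRationalsSum where
  toFun ε := (DFinsupp.mapRange.addEquiv fun p => DistribMulAction.toAddAut ℤˣ _ (ε p).toMul :
    PadicRationalsSum ≃+ PadicRationalsSum)
  map_zero' := by ext; simp
  map_add' ε ε' := by ext; simp [mul_smul]

theorem signAut_apply (ε : Nat.Primes → Additive ℤˣ) (x : PadicRationalsSum) (q : Nat.Primes) :
    signAut ε x q = (ε q).toMul • x q :=
  rfl

theorem signAut_apply_of (ε : Nat.Primes → Additive ℤˣ) (p : Nat.Primes)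
    (x : padicRationals p.1 p.2) : signAut ε (of _ p x) = of _ p ((ε p).toMul • x) := by
  ext q
  rw [signAut_apply]
  rcases eq_or_ne p q with rfl | hpq
  · rw [of_eq_same, of_eq_same]
  · rw [of_eq_of_ne _ _ _ hpq.symm, of_eq_of_ne _ _ _ hpq.symm, smul_zero]

theorem signChar_signAut (ε : Nat.Primes → Additive ℤˣ) : signChar (signAut ε) = ε := by
  ext p : 1
  have : scale (signAut ε) p = ((ε p).toMul : ℤ) := by
    rw [scale, AddMonoidHom.coe_coe, signAut_apply, of_eq_same, Units.smul_def,
      AddSubgroup.coe_zsmul, one, zsmul_one]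
  simp only [signChar, AddMonoidHom.coe_mk, ZeroHom.coe_mk, this, Rat.unitsSign_mk0_intCast,
    ofMul_toMul]

theorem signAut_injective : Function.Injective signAut :=
  Function.LeftInverse.injective signChar_signAut

theorem signChar_surjective : Function.Surjective signChar :=
  Function.LeftInverse.surjective signChar_signAut

theorem mk_addAut : #(AddAut PadicRationalsSum) = 2 ^ ℵ₀ := by
  refine (AddAut.mk_le_two_pow_aleph0 _).antisymm ?_
  calc (2 : Cardinal) ^ ℵ₀ = #(Nat.Primes → Additive ℤˣ) := by
        rw [← power_def, mk_eq_aleph0 Nat.Primes]; simp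
    _ ≤ #(AddAut PadicRationalsSum) := mk_le_of_injective signAut_injective

theorem two_pow_two_pow_aleph0_le_mk_addAut_addAut :
    (2 : Cardinal) ^ (2 : Cardinal) ^ ℵ₀ ≤ #(AddAut (AddAut PadicRationalsSum)) := by
  let two : Nat.Primes := ⟨2, Nat.prime_two⟩
  -- the sign flip on `ℤ[1/2]` is central and invisible to the signs at the other primes
  let ι := signAut.comp (AddMonoidHom.single _ two)
  let χ :=
    (LinearMap.funLeft ℕ (Additive ℤˣ) (Subtype.val : {p // p ≠ two} → _)).toAddMonoidHom.comp
      signChar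
  have hι_inj : Function.Injective ι := fun _ _ h =>
    Pi.single_injective two (signAut_injective h)
  have hχ : Function.Surjective χ :=
    (LinearMap.funLeft_surjective_of_injective ℕ (Additive ℤˣ) _ Subtype.val_injective).comp
      signChar_surjective
  have hχι : χ.comp ι = 0 := by
    ext u p
    simp [χ, ι, signChar_signAut, p.2]
  have h2 : Nat.card (Additive ℤˣ) = 2 := by
    simp [Nat.card_eq_fintype_card, Fintype.card_units_int]
  have : Fact (Nat.Prime 2) := ⟨Nat.prime_two⟩
  have : Infinite {p // p ≠ two} := ((Set.finite_singleton two).infinite_compl).to_subtype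
  calc (2 : Cardinal) ^ (2 : Cardinal) ^ ℵ₀
      = #(({p // p ≠ two} → Additive ℤˣ) →+ Additive ℤˣ) := by
        rw [mk_addMonoidHom_pi_of_card_eq_prime h2, mk_eq_aleph0]; simp
    _ ≤ _ := AddAut.mk_addMonoidHom_le_mk_addAut ι hι_inj (fun _ => addAut_addCommute _) χ hχ hχι

theorem mk_addAut_addAut :
    #(AddAut (AddAut PadicRationalsSum)) = (2 : Cardinal) ^ (2 : Cardinal) ^ ℵ₀ := by
  have : Infinite (AddAut PadicRationalsSum) := infinite_iff.2 (mk_addAut ▸ (cantor ℵ₀).le)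
  refine le_antisymm ?_ two_pow_two_pow_aleph0_le_mk_addAut_addAut
  calc #(AddAut (AddAut PadicRationalsSum)) ≤ #(Equiv.Perm (AddAut PadicRationalsSum)) :=
        mk_le_of_injective AddEquiv.toEquiv_injective
    _ = (2 : Cardinal) ^ (2 : Cardinal) ^ ℵ₀ := by rw [mk_perm_eq_two_power, mk_addAut]

end PadicRationalsSum

/-- `G = ⊕_p ℤ[1/p]` is a countable group with `|Aut G| = 2 ^ ℵ₀` and
`|Aut (Aut G)| = 2 ^ (2 ^ ℵ₀)`. -/
theorem card_aut_aut_directSum_padicRationals :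
    Countable (⨁ (q : Nat.Primes), padicRationals q.1 q.2) ∧
    Cardinal.mk (AddAut (⨁ (q : Nat.Primes), padicRationals q.1 q.2)) =
      2 ^ Cardinal.aleph0 ∧
    Cardinal.mk (MulAut (Multiplicative (AddAut (⨁ (q : Nat.Primes), padicRationals q.1 q.2)))) =
      (2 : Cardinal) ^ ((2 : Cardinal) ^ Cardinal.aleph0) := by
  refine ⟨inferInstance, PadicRationalsSum.mk_addAut, ?_⟩
  rw [mk_congr (MulAutMultiplicative _).toEquiv, mk_multiplicative]
  exact PadicRationalsSum.mk_addAut_addAut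
end
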